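/- Let R : ℝ^N → ℝ be differentiable with L-Lipschitz gradient, and let β̄ ≥ 1, 0 < λ < 1/(2β̄). Then there exists η_o > 0 (depending only on λ, β̄, L) such that for all 0 < η ≤ η_o with η ≤ 1/β̄, and all θ, v ∈ ℝ^N, setting v_η = (1−β̄η)v + η∇R(θ) and θ_η = θ − η v_η, the Lyapunov function V(θ,v) = R(θ) + ‖v‖²/2 satisfies V(θ_η, v_η) − V(θ, v) ≤ −λβ̄η‖v_η‖². -/

import Mathlib

/-!
Write `g = ∇R(θ)` and `w = v_η`. The descent lemma bounds the change of `R` by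
`-η⟪g, w⟫ + (L/2) η² ‖w‖²`. Since `w - (1 - β̄η) v = η g`, convexity of `‖·‖²` with weight
`1 - β̄η ∈ [0, 1]` bounds the change of `‖v‖²/2` by `η⟪g, w⟫ - β̄η ‖w‖²/2`. The cross terms cancel,
leaving `-(β̄ - Lη) η ‖w‖²/2`, which is at most `-λβ̄η ‖w‖²` as soon as `Lη ≤ 1 - 2λβ̄`.
-/

open InnerProductSpace
open scoped Gradient

variable {F : Type*} [NormedAddCommGroup F] [InnerProductSpace ℝ F]

theorem norm_sq_sub_norm_sq_le_inner_sub_smul {a : ℝ} (ha₀ : 0 ≤ a) (ha₁ : a ≤ 1) (v w : F) :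
    ‖w‖ ^ 2 - ‖v‖ ^ 2 ≤ 2 * ⟪w - a • v, w⟫_ℝ - (1 - a) * ‖w‖ ^ 2 := by
  rw [inner_sub_left, real_inner_smul_left, real_inner_self_eq_norm_sq]
  -- the gap is `a ‖v - w‖² + (1 - a) ‖v‖²`
  nlinarith [mul_nonneg ha₀ (sq_nonneg ‖v - w‖), norm_sub_sq_real v w,
    mul_nonneg (sub_nonneg.2 ha₁) (sq_nonneg ‖v‖)]

noncomputable def mechanicalEnergy (f : F → ℝ) (θ v : F) : ℝ := f θ + ‖v‖ ^ 2 / 2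

variable [CompleteSpace F]

theorem hasDerivAt_comp_add_smul {f : F → ℝ} {x d : F} {t : ℝ}
    (hf : DifferentiableAt ℝ f (x + t • d)) :
    HasDerivAt (fun s : ℝ => f (x + s • d)) ⟪∇ f (x + t • d), d⟫_ℝ t := by
  have hline : HasDerivAt (fun s : ℝ => x + s • d) d t := by
    simpa using ((hasDerivAt_id t).smul_const d).const_add x
  simpa [Function.comp_def] using hf.hasGradientAt.hasFDerivAt.comp_hasDerivAt t hline

theorem sub_le_inner_gradient_add_of_lipschitz_gradient {f : F → ℝ} {L : ℝ}
    (hf : Differentiable ℝ f) (hLip : ∀ x y, ‖∇ f x - ∇ f y‖ ≤ L * ‖x - y‖) (x y : F) :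
    f y - f x ≤ ⟪∇ f x, y - x⟫_ℝ + L / 2 * ‖y - x‖ ^ 2 := by
  set d := y - x
  -- `φ` has derivative `⟪∇ f (x + t • d) - ∇ f x, d⟫ - L t ‖d‖²`, which is `≤ 0` for `t ≥ 0`.
  let φ : ℝ → ℝ := fun t => f (x + t • d) - t * ⟪∇ f x, d⟫_ℝ - L / 2 * t ^ 2 * ‖d‖ ^ 2
  have hφ : ∀ t, HasDerivAt φ (⟪∇ f (x + t • d), d⟫_ℝ - ⟪∇ f x, d⟫_ℝ - L * t * ‖d‖ ^ 2) t := by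
    intro t
    have hlin : HasDerivAt (fun s : ℝ => s * ⟪∇ f x, d⟫_ℝ) ⟪∇ f x, d⟫_ℝ t := by
      simpa using (hasDerivAt_id t).mul_const ⟪∇ f x, d⟫_ℝ
    have hquad : HasDerivAt (fun s : ℝ => L / 2 * s ^ 2 * ‖d‖ ^ 2) (L * t * ‖d‖ ^ 2) t := by
      refine (((hasDerivAt_pow 2 t).const_mul (L / 2)).mul_const (‖d‖ ^ 2)).congr_deriv ?_
      push_cast
      ring
    exact ((hasDerivAt_comp_add_smul (hf _)).sub hlin).sub hquad
  have hφ' : ∀ t ∈ interior (Set.Icc (0 : ℝ) 1),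
      ⟪∇ f (x + t • d), d⟫_ℝ - ⟪∇ f x, d⟫_ℝ - L * t * ‖d‖ ^ 2 ≤ 0 := by
    intro t ht
    rw [interior_Icc] at ht
    refine sub_nonpos.2 ?_
    calc ⟪∇ f (x + t • d), d⟫_ℝ - ⟪∇ f x, d⟫_ℝ
        = ⟪∇ f (x + t • d) - ∇ f x, d⟫_ℝ := (inner_sub_left _ _ _).symm
      _ ≤ ‖∇ f (x + t • d) - ∇ f x‖ * ‖d‖ := real_inner_le_norm _ _
      _ ≤ L * ‖(x + t • d) - x‖ * ‖d‖ := by gcongr; exact hLip _ _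
      _ = L * t * ‖d‖ ^ 2 := by
        rw [add_sub_cancel_left, norm_smul, Real.norm_of_nonneg ht.1.le]; ring
  have hanti : AntitoneOn φ (Set.Icc 0 1) :=
    antitoneOn_of_hasDerivWithinAt_nonpos (convex_Icc 0 1)
      (fun t _ => (hφ t).continuousAt.continuousWithinAt)
      (fun t _ => (hφ t).hasDerivWithinAt) hφ'
  have h01 := hanti (Set.left_mem_Icc.2 zero_le_one) (Set.right_mem_Icc.2 zero_le_one)
    zero_le_one
  simp only [φ, one_smul, zero_smul, add_zero, add_sub_cancel, d] at h01
  linarith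

theorem mechanicalEnergy_momentum_step_sub_le {f : F → ℝ} {L β η : ℝ}
    (hf : Differentiable ℝ f) (hLip : ∀ x y, ‖∇ f x - ∇ f y‖ ≤ L * ‖x - y‖)
    (hβη₀ : 0 ≤ β * η) (hβη₁ : β * η ≤ 1) {θ v θ' v' : F}
    (hv' : v' = (1 - β * η) • v + η • ∇ f θ) (hθ' : θ' = θ - η • v') :
    mechanicalEnergy f θ' v' - mechanicalEnergy f θ v ≤ -((β - L * η) * η / 2 * ‖v'‖ ^ 2) := by
  have hdescent : f θ' - f θ ≤ -(η * ⟪∇ f θ, v'⟫_ℝ) + L / 2 * η ^ 2 * ‖v'‖ ^ 2 := by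
    have h := sub_le_inner_gradient_add_of_lipschitz_gradient hf hLip θ θ'
    rwa [hθ', sub_sub_cancel_left, ← hθ', inner_neg_right, real_inner_smul_right, norm_neg,
      norm_smul, Real.norm_eq_abs, mul_pow, sq_abs, ← mul_assoc] at h
  have hkinetic : ‖v'‖ ^ 2 - ‖v‖ ^ 2 ≤ 2 * (η * ⟪∇ f θ, v'⟫_ℝ) - β * η * ‖v'‖ ^ 2 := by
    have h := norm_sq_sub_norm_sq_le_inner_sub_smul (sub_nonneg.2 hβη₁)
      (sub_le_self 1 hβη₀) v v'
    rwa [hv', add_sub_cancel_left, real_inner_smul_left, ← hv', sub_sub_cancel] at h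
  unfold mechanicalEnergy
  linarith

theorem momentum_dissipation_general (N : ℕ) (R : EuclideanSpace ℝ (Fin N) → ℝ)
    (hR : Differentiable ℝ R) (L : ℝ) (hL : 0 < L)
    (hLip : ∀ x y, ‖gradient R x - gradient R y‖ ≤ L * ‖x - y‖)
    (βb lam : ℝ) (hβ : 1 ≤ βb) (hlam : lam < 1 / (2 * βb)) :
    ∃ ηo > 0, ∀ η, 0 < η → η ≤ ηo → η ≤ 1 / βb →
      ∀ θ v vη θη : EuclideanSpace ℝ (Fin N),
        vη = (1 - βb * η) • v + η • gradient R θ →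
        θη = θ - η • vη →
        (R θη + ‖vη‖ ^ 2 / 2) - (R θ + ‖v‖ ^ 2 / 2) ≤ -(lam * βb * η * ‖vη‖ ^ 2) := by
  have hβ₀ : 0 < βb := by linarith
  have hlamβ : 2 * lam * βb < 1 := by
    rw [lt_div_iff₀ (by positivity)] at hlam
    linarith
  refine ⟨(1 - 2 * lam * βb) / L, div_pos (by linarith) hL, ?_⟩
  intro η hη hηo hηβ θ v vη θη hvη hθη
  have hβη : βb * η ≤ 1 := by rwa [le_div_iff₀ hβ₀, mul_comm] at hηβ
  have hLη : L * η ≤ βb - 2 * lam * βb := by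
    rw [le_div_iff₀ hL, mul_comm] at hηo
    linarith
  have hstep := mechanicalEnergy_momentum_step_sub_le hR hLip (by positivity) hβη hvη hθη
  unfold mechanicalEnergy at hstep
  linarith [mul_le_mul_of_nonneg_right hLη (mul_nonneg hη.le (sq_nonneg ‖vη‖))]

theorem momentum_dissipation (N : ℕ) (R : EuclideanSpace ℝ (Fin N) → ℝ)
    (hR : Differentiable ℝ R) (L : ℝ) (hL : 0 < L)
    (hLip : ∀ x y, ‖gradient R x - gradient R y‖ ≤ L * ‖x - y‖)
    (βb lam : ℝ) (hβ : 1 ≤ βb) (hlam0 : 0 < lam) (hlam : lam < 1 / (2 * βb)) :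
    ∃ ηo > 0, ∀ η, 0 < η → η ≤ ηo → η ≤ 1 / βb →
      ∀ θ v vη θη : EuclideanSpace ℝ (Fin N),
        vη = (1 - βb * η) • v + η • gradient R θ →
        θη = θ - η • vη →
        (R θη + ‖vη‖ ^ 2 / 2) - (R θ + ‖v‖ ^ 2 / 2) ≤ -(lam * βb * η * ‖vη‖ ^ 2) :=
  momentum_dissipation_general N R hR L hL hLip βb lam hβ hlam
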